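/- arXiv:1302.4347 — 2 statements merged into one kernel-verified Lean document; each statement's English description precedes it below -/
import Mathlib

section
/- For natural numbers k, n, a with 3a ≤ ka and a ≤ kn: C(ka, 3a) * tau(3a) * tau(3kn - 3a) / tau(3kn) = C(ka,3a) * C(kn,a) / C(3kn,3a), where tau(m) = m!/(6^(m/3)(m/3)!). -/
noncomputable def tau (m : ℕ) : ℝ :=
  (m.factorial : ℝ) / (6 ^ (m / 3) * (m / 3).factorial)

/-- `C(ka, 3a) * tau(3a) * tau(3kn - 3a) / tau(3kn) = C(ka,3a) * C(kn,a) / C(3kn,3a)`. -/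
theorem choose_tau_identity (k n a : ℕ) (h1 : 3 * a ≤ k * a) (h2 : a ≤ k * n) :
    ((k * a).choose (3 * a) : ℝ) * tau (3 * a) * tau (3 * k * n - 3 * a) / tau (3 * k * n)
      = ((k * a).choose (3 * a) : ℝ) * ((k * n).choose a : ℝ) /
        ((3 * k * n).choose (3 * a) : ℝ) := by
  have h3 : 3 * k * n = 3 * (k * n) := by ring
  have h4 : 3 * (k * n) - 3 * a = 3 * (k * n - a) := by omega
  have h5 : 3 * a ≤ 3 * (k * n) := by omega
  rw [h3, h4, tau, tau, tau]
  rw [Nat.mul_div_cancel_left _ (by norm_num : 0 < 3),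
      Nat.mul_div_cancel_left _ (by norm_num : 0 < 3),
      Nat.mul_div_cancel_left _ (by norm_num : 0 < 3)]
  rw [Nat.cast_choose ℝ h2, Nat.cast_choose ℝ h5]
  have e1 : (3 : ℕ) * (k * n) - 3 * a = 3 * (k * n - a) := by omega
  rw [e1]
  have f1 : ((3 * a).factorial : ℝ) ≠ 0 := by positivity
  have f2 : ((3 * (k * n - a)).factorial : ℝ) ≠ 0 := by positivity
  have f3 : ((3 * (k * n)).factorial : ℝ) ≠ 0 := by positivity
  have f4 : (a.factorial : ℝ) ≠ 0 := by positivity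
  have f5 : ((k * n - a).factorial : ℝ) ≠ 0 := by positivity
  have f6 : ((k * n).factorial : ℝ) ≠ 0 := by positivity
  have g1 : (6 : ℝ) ^ a ≠ 0 := by positivity
  have g2 : (6 : ℝ) ^ (k * n - a) ≠ 0 := by positivity
  have g3 : (6 : ℝ) ^ (k * n) ≠ 0 := by positivity
  have hp : (6 : ℝ) ^ a * 6 ^ (k * n - a) = 6 ^ (k * n) := by
    rw [← pow_add]; congr 1; omega
  field_simp
  rw [← hp]; ring
end

section
/- For natural numbers k ≥ 1, n ≥ 1, and 1 ≤ a ≤ n, the quantity C(3n,a)*C(ka,3a)*C(kn,a)/C(3kn,3a) is less than (e^5 * k * a / (9n))^a. -/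
/-!
Each binomial coefficient in the numerator is bounded above by `C(m, r) < (e m / r) ^ r`, which
follows from `C(m, r) ≤ m ^ r / r!` and Stirling's lower bound `r! > (r / e) ^ r`. The denominator
is bounded below by `C(m, r) ≥ (m / r) ^ r`, which holds because every factor `(m - i) / (r - i)`
of `C(m, r)` is at least `m / r`. The resulting powers then combine exactly.
-/

open Nat Finset Real

theorem Nat.pow_mul_factorial_le_pow_mul_descFactorial {r m : ℕ} (hrm : r ≤ m) :
    m ^ r * r ! ≤ r ^ r * m.descFactorial r := by
  rw [← descFactorial_self, descFactorial_eq_prod_range, descFactorial_eq_prod_range,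
    pow_eq_prod_const, pow_eq_prod_const, ← prod_mul_distrib, ← prod_mul_distrib]
  refine prod_le_prod' fun i _ => ?_
  rw [Nat.mul_sub, Nat.mul_sub, Nat.mul_comm m r]
  exact Nat.sub_le_sub_left (Nat.mul_le_mul_right i hrm) _

theorem Nat.div_pow_le_choose {r m : ℕ} (hrm : r ≤ m) : ((m : ℝ) / r) ^ r ≤ m.choose r := by
  rcases r.eq_zero_or_pos with rfl | hr
  · simp
  have key := pow_mul_factorial_le_pow_mul_descFactorial hrm
  rw [descFactorial_eq_factorial_mul_choose, Nat.mul_left_comm, Nat.mul_comm (m ^ r)] at key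
  have hpow : m ^ r ≤ m.choose r * r ^ r :=
    Nat.mul_comm (r ^ r) _ ▸ Nat.le_of_mul_le_mul_left key r.factorial_pos
  rw [div_pow, div_le_iff₀ (by positivity)]
  exact_mod_cast hpow

theorem Nat.div_exp_one_pow_lt_factorial {r : ℕ} (hr : r ≠ 0) :
    ((r : ℝ) / exp 1) ^ r < r ! := by
  have hsqrt : 1 < √(2 * π * r) := by
    rw [Real.lt_sqrt zero_le_one, one_pow]
    have : (1 : ℝ) ≤ r := by exact_mod_cast Nat.one_le_iff_ne_zero.mpr hr
    nlinarith [pi_gt_three]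
  calc ((r : ℝ) / exp 1) ^ r < √(2 * π * r) * (r / exp 1) ^ r :=
        lt_mul_of_one_lt_left (by positivity) hsqrt
    _ ≤ r ! := Stirling.le_factorial_stirling r

theorem Nat.choose_lt_exp_one_mul_div_pow {r m : ℕ} (hr : r ≠ 0) (hm : m ≠ 0) :
    (m.choose r : ℝ) < (exp 1 * m / r) ^ r := by
  calc (m.choose r : ℝ) ≤ (m : ℝ) ^ r / r ! := choose_le_pow_div r m
    _ < (m : ℝ) ^ r / ((r : ℝ) / exp 1) ^ r := by
        gcongr
        exact div_exp_one_pow_lt_factorial hr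
    _ = (exp 1 * m / r) ^ r := by
        rw [← div_pow]
        congr 1
        field_simp

theorem unstable_probability_bound_general (k n a : ℕ) (hk : 1 ≤ k)
    (ha1 : 1 ≤ a) (han : a ≤ n) :
    ((3 * n).choose a : ℝ) * ((k * a).choose (3 * a) : ℝ) * ((k * n).choose a : ℝ) /
        ((3 * k * n).choose (3 * a) : ℝ)
      < (Real.exp 1 ^ 5 * k * a / (9 * n)) ^ a := by
  have hk0 : k ≠ 0 := by omega
  have hn0 : n ≠ 0 := by omega
  have ha0 : a ≠ 0 := by omega
  have h3n := choose_lt_exp_one_mul_div_pow (m := 3 * n) ha0 (by omega)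
  have hka :=
    choose_lt_exp_one_mul_div_pow (m := k * a) (r := 3 * a) (by omega) (mul_ne_zero hk0 ha0)
  have hkn := choose_lt_exp_one_mul_div_pow (m := k * n) ha0 (mul_ne_zero hk0 hn0)
  have h3kn := div_pow_le_choose (m := 3 * k * n) (r := 3 * a) (by nlinarith)
  push_cast at h3n hka hkn h3kn
  calc ((3 * n).choose a : ℝ) * ((k * a).choose (3 * a) : ℝ) * ((k * n).choose a : ℝ) /
        ((3 * k * n).choose (3 * a) : ℝ)
      ≤ ((3 * n).choose a : ℝ) * ((k * a).choose (3 * a) : ℝ) * ((k * n).choose a : ℝ) /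
          (3 * k * n / (3 * a) : ℝ) ^ (3 * a) := by gcongr
    _ < (exp 1 * (3 * n) / a) ^ a * (exp 1 * (k * a) / (3 * a)) ^ (3 * a) *
          (exp 1 * (k * n) / a) ^ a / (3 * k * n / (3 * a) : ℝ) ^ (3 * a) := by gcongr
    _ = (exp 1 ^ 5 * k * a / (9 * n)) ^ a := by
        rw [pow_mul, pow_mul, ← mul_pow, ← mul_pow, ← div_pow]
        congr 1
        field_simp
        norm_num

/-- `C(3n,a) C(ka,3a) C(kn,a) / C(3kn,3a) < (e^5 k a / (9n))^a`. -/
theorem unstable_probability_bound (k n a : ℕ) (hk : 1 ≤ k) (hn : 1 ≤ n)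
    (ha1 : 1 ≤ a) (han : a ≤ n) (hka : 3 * a ≤ k * a) :
    ((3 * n).choose a : ℝ) * ((k * a).choose (3 * a) : ℝ) * ((k * n).choose a : ℝ) /
        ((3 * k * n).choose (3 * a) : ℝ)
      < (Real.exp 1 ^ 5 * k * a / (9 * n)) ^ a :=
  unstable_probability_bound_general k n a hk ha1 han
end
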